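/- Let s ∈ (0,1) and let g(z) = Γ(2s−z) Γ(z+1)/Γ(2s) − sin(π(s−z))/sin(πs). Then there exists M > 0 such that g(β) ≠ 0 for every β ∈ ℂ with Re β ∈ (0, 2s + 1/2) and |Im β| ≥ M. -/

import Mathlib

/-!
`‖Γ z‖ ≤ Γ (re z) ≤ 4` whenever `re z ∈ [1/2, 7/2]`, by convexity of the real Gamma function.
Hence `Γ(β + 1)` is bounded on the strip and, by `Γ(w + 1) = w Γ(w)`,
`‖Γ(2s - β)‖ ≤ 4 / |im β|`. So the Gamma term of `g` is `O(1 / |im β|)`, while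
`‖sin (π (s - β))‖ ≥ sinh (π |im β|)` grows exponentially: the two terms cannot cancel once
`|im β|` is large.
-/

noncomputable def gFun (s : ℝ) (z : ℂ) : ℂ :=
  Complex.Gamma (2 * s - z) * Complex.Gamma (z + 1) / Complex.Gamma (2 * s) -
    Complex.sin (Real.pi * (s - z)) / Complex.sin (Real.pi * s)

open Real Set

theorem Complex.norm_Gamma_le_Gamma_re {z : ℂ} (hz : 0 < z.re) :
    ‖Complex.Gamma z‖ ≤ Real.Gamma z.re := by
  rw [Complex.Gamma_eq_integral hz, Real.Gamma_eq_integral hz, Complex.GammaIntegral]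
  refine (MeasureTheory.norm_integral_le_integral_norm _).trans_eq ?_
  refine MeasureTheory.setIntegral_congr_fun measurableSet_Ioi fun x hx => ?_
  rw [norm_mul, Complex.norm_real, Real.norm_of_nonneg (exp_pos _).le,
    Complex.norm_cpow_eq_rpow_re_of_pos hx, Complex.sub_re, Complex.one_re]

theorem Complex.sinh_abs_im_le_norm_sin (z : ℂ) : Real.sinh |z.im| ≤ ‖Complex.sin z‖ := by
  have hexp₁ : ‖Complex.exp (-z * I)‖ = rexp z.im := by simp [Complex.norm_exp]
  have hexp₂ : ‖Complex.exp (z * I)‖ = rexp (-z.im) := by simp [Complex.norm_exp]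
  calc Real.sinh |z.im| = |rexp z.im - rexp (-z.im)| / 2 := by
        rw [← Real.abs_sinh, Real.sinh_eq, abs_div, abs_two]
    _ ≤ ‖Complex.exp (-z * I) - Complex.exp (z * I)‖ / 2 := by
        rw [← hexp₁, ← hexp₂]
        gcongr
        exact abs_norm_sub_norm_le _ _
    _ = ‖Complex.sin z‖ := by simp [Complex.sin]

theorem Real.Gamma_le_four_of_mem_Icc {x : ℝ} (hx : x ∈ Icc (1 / 2) (7 / 2)) :
    Real.Gamma x ≤ 4 := by
  have hsqrt : √π ≤ 2 := Real.sqrt_le_iff.mpr ⟨by norm_num, by linarith [pi_le_four]⟩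
  have hleft : Real.Gamma (1 / 2) ≤ 4 := by rw [Gamma_one_half_eq]; linarith
  have hright : Real.Gamma (7 / 2) ≤ 4 := by
    have : Real.Gamma (7 / 2) = 5 / 2 * (3 / 2 * (1 / 2 * √π)) := by
      rw [show (7 / 2 : ℝ) = 1 / 2 + 1 + 1 + 1 by norm_num, Gamma_add_one (by norm_num),
        Gamma_add_one (by norm_num), Gamma_add_one (by norm_num), Gamma_one_half_eq]
      norm_num
    rw [this]; linarith
  exact (convexOn_Gamma.le_max_of_mem_Icc (by norm_num) (by norm_num) hx).trans
    (max_le hleft hright)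

theorem Complex.norm_Gamma_le_four {z : ℂ} (hz : z.re ∈ Icc (1 / 2) (7 / 2)) :
    ‖Complex.Gamma z‖ ≤ 4 :=
  (norm_Gamma_le_Gamma_re (by linarith [hz.1])).trans (Real.Gamma_le_four_of_mem_Icc hz)

theorem Complex.norm_Gamma_le_four_div_abs_im {z : ℂ} (hz : z.re ∈ Icc (-1 / 2) (5 / 2))
    (him : z.im ≠ 0) : ‖Complex.Gamma z‖ ≤ 4 / |z.im| := by
  have hz0 : z ≠ 0 := fun h => him (by simp [h])
  have hshift : ‖Complex.Gamma (z + 1)‖ ≤ 4 :=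
    norm_Gamma_le_four (by simp only [add_re, one_re]; constructor <;> linarith [hz.1, hz.2])
  rw [Complex.Gamma_add_one z hz0, norm_mul] at hshift
  rw [le_div_iff₀ (abs_pos.mpr him)]
  calc ‖Complex.Gamma z‖ * |z.im| ≤ ‖Complex.Gamma z‖ * ‖z‖ := by
        gcongr; exact abs_im_le_norm z
    _ ≤ 4 := by linarith

theorem norm_Gamma_two_mul_sub_mul_Gamma_add_one_le {s : ℝ} (hs : s ≤ 1) {β : ℂ}
    (hre : β.re ∈ Ioo 0 (2 * s + 1 / 2)) (him : β.im ≠ 0) :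
    ‖Complex.Gamma (2 * s - β) * Complex.Gamma (β + 1)‖ ≤ 16 / |β.im| := by
  obtain ⟨hre₀, hre₁⟩ := hre
  have h₁ : ‖Complex.Gamma (2 * s - β)‖ ≤ 4 / |β.im| := by
    simpa using Complex.norm_Gamma_le_four_div_abs_im (z := 2 * s - β)
      ⟨by simp; linarith, by simp; linarith⟩
      (by simpa using him)
  have h₂ : ‖Complex.Gamma (β + 1)‖ ≤ 4 :=
    Complex.norm_Gamma_le_four ⟨by simp; linarith, by simp; linarith⟩
  rw [norm_mul, show 16 / |β.im| = 4 / |β.im| * 4 by ring]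
  gcongr

theorem sinh_mul_abs_im_le_norm_sin_pi_mul_sub (s : ℝ) (β : ℂ) :
    Real.sinh (π * |β.im|) ≤ ‖Complex.sin (π * (s - β))‖ := by
  simpa [abs_mul, abs_of_pos pi_pos] using Complex.sinh_abs_im_le_norm_sin (π * (s - β))

theorem Gamma_mul_sinh_le_of_gFun_eq_zero {s : ℝ} (hs : s ∈ Ioo 0 1) {β : ℂ}
    (hre : β.re ∈ Ioo 0 (2 * s + 1 / 2)) (him : β.im ≠ 0) (hzero : gFun s β = 0) :
    Real.Gamma (2 * s) * Real.sinh (π * |β.im|) ≤ 16 * Real.sin (π * s) / |β.im| := by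
  set S := Real.sin (π * s)
  set G := Real.Gamma (2 * s)
  have hS : 0 < S := sin_pos_of_pos_of_lt_pi (mul_pos pi_pos hs.1)
    (mul_lt_of_lt_one_right pi_pos hs.2)
  have hG : 0 < G := Gamma_pos_of_pos (by linarith [hs.1])
  have hGc : Complex.Gamma (2 * s) = G := by
    rw [← Complex.Gamma_ofReal]; push_cast; rfl
  have hSc : Complex.sin (π * s) = S := by simp [S, Complex.ofReal_sin]
  rw [gFun, sub_eq_zero, hGc, hSc,
    div_eq_div_iff (by exact_mod_cast hG.ne') (by exact_mod_cast hS.ne')] at hzero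
  have hnorm : ‖Complex.Gamma (2 * s - β) * Complex.Gamma (β + 1)‖ * S =
      ‖Complex.sin (π * (s - β))‖ * G := by
    simpa only [norm_mul _ (S : ℂ), norm_mul _ (G : ℂ), Complex.norm_of_nonneg hS.le,
      Complex.norm_of_nonneg hG.le] using congrArg norm hzero
  calc G * Real.sinh (π * |β.im|) ≤ G * ‖Complex.sin (π * (s - β))‖ := by
        gcongr; exact sinh_mul_abs_im_le_norm_sin_pi_mul_sub s β
    _ = ‖Complex.Gamma (2 * s - β) * Complex.Gamma (β + 1)‖ * S := by rw [hnorm]; ring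
    _ ≤ 16 / |β.im| * S := by
        gcongr; exact norm_Gamma_two_mul_sub_mul_Gamma_add_one_le hs.2.le hre him
    _ = 16 * S / |β.im| := by ring

theorem gFun_no_zeros_large_imaginary (s : ℝ) (hs : s ∈ Set.Ioo (0 : ℝ) 1) :
    ∃ M > 0, ∀ β : ℂ, β.re ∈ Set.Ioo (0 : ℝ) (2 * s + 1/2) →
      M ≤ |β.im| → gFun s β ≠ 0 := by
  set S := Real.sin (π * s)
  set G := Real.Gamma (2 * s)
  have hG : 0 < G := Gamma_pos_of_pos (by linarith [hs.1])
  refine ⟨max 1 (16 * S / (π * G)), lt_max_of_lt_left one_pos, fun β hre hM hzero => ?_⟩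
  set T := |β.im|
  have hT₁ : 1 ≤ T := (le_max_left _ _).trans hM
  have hT : 16 * S ≤ π * G * T := by
    have := (le_max_right _ _).trans hM
    rw [div_le_iff₀ (by positivity)] at this
    linarith
  have hT₀ : 0 < T := by linarith
  have hbound := Gamma_mul_sinh_le_of_gFun_eq_zero hs hre (abs_pos.mp hT₀) hzero
  have hsinh : π * T < Real.sinh (π * T) := self_lt_sinh_iff.mpr (by positivity)
  rw [le_div_iff₀ (by positivity)] at hbound
  change G * Real.sinh (π * T) * T ≤ 16 * S at hbound
  linarith [mul_lt_mul_of_pos_right (mul_lt_mul_of_pos_left hsinh hG) hT₀,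
    mul_le_mul_of_nonneg_left hT₁ (by positivity : 0 ≤ π * G * T)]
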